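/- arXiv:1804.07936 — 2 statements merged into one kernel-verified Lean document; each statement's English description precedes it below -/
import Mathlib

section
/- Let α, k ∈ ℂ with Re(α) ≥ 0 and Re(k) > 0, and set n = ⌊Re(α)⌋ + 1. Then the function g : ℂ → ℂ defined by g(t) = (1/Γ(n−α)) · ∫_0^∞ r^{n−α−1} · e^{k(t−r)} dr is n times complex differentiable on ℂ, and its n-th derivative at every t ∈ ℂ equals k^α · e^{kt}, where k^α is the principal branch (argument of k in (−π, π)). -/
/-! For `Re a > 0` and `Re z > 0`, `∫₀^∞ t^(a-1) e^(-zt) dt = (1/z)^a Γ(a)`: both sides are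
holomorphic in `z` on the right half-plane and agree for real `z > 0`. Pulling `e^(kt)` out of
the integral, the fractional integral of order `n - α` of `e^(kt)` is therefore
`(1/k)^(n-α) e^(kt)`, whose `n`-th derivative is `(1/k)^(n-α) kⁿ e^(kt) = k^α e^(kt)`. -/

open Complex MeasureTheory Set Filter Topology

lemma integrableOn_rpow_mul_exp_neg_mul_Ioi {s c : ℝ} (hs : -1 < s) (hc : 0 < c) :
    IntegrableOn (fun t : ℝ => t ^ s * Real.exp (-(c * t))) (Ioi 0) := by
  simpa using integrableOn_rpow_mul_exp_neg_mul_rpow hs one_pos hc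

namespace Complex

lemma norm_cpow_mul_exp_neg_mul {t : ℝ} (ht : 0 < t) (a z : ℂ) :
    ‖(t : ℂ) ^ (a - 1) * exp (-(z * t))‖ = t ^ (a.re - 1) * Real.exp (-(z.re * t)) := by
  rw [norm_mul, norm_cpow_eq_rpow_re_of_pos ht, norm_exp]
  simp

lemma integrableOn_cpow_mul_exp_neg_mul_Ioi {a z : ℂ} (ha : 0 < a.re) (hz : 0 < z.re) :
    IntegrableOn (fun t : ℝ => (t : ℂ) ^ (a - 1) * exp (-(z * t))) (Ioi 0) := by
  refine (integrableOn_rpow_mul_exp_neg_mul_Ioi (s := a.re - 1) (by linarith) hz).mono'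
    (by fun_prop) ?_
  filter_upwards [ae_restrict_mem measurableSet_Ioi] with t ht
  exact (norm_cpow_mul_exp_neg_mul ht a z).le

lemma hasDerivAt_cpow_mul_exp_neg_mul {t : ℝ} (ht : 0 < t) (a x : ℂ) :
    HasDerivAt (fun z : ℂ => (t : ℂ) ^ (a - 1) * exp (-(z * t)))
      (-((t : ℂ) ^ (a + 1 - 1) * exp (-(x * t)))) x := by
  refine (((hasDerivAt_mul_const (t : ℂ)).neg.cexp).const_mul ((t : ℂ) ^ (a - 1))).congr_deriv
    ?_
  simp only [Pi.neg_apply]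
  rw [add_sub_right_comm, cpow_add _ _ (ofReal_ne_zero.2 ht.ne'), cpow_one]
  ring

lemma differentiableOn_integral_cpow_mul_exp_neg_mul_Ioi {a : ℂ} (ha : 0 < a.re) :
    DifferentiableOn ℂ
      (fun z : ℂ => ∫ t in Ioi (0 : ℝ), (t : ℂ) ^ (a - 1) * exp (-(z * t))) {z | 0 < z.re} := by
  intro z hz
  have hz' : 0 < z.re := hz
  have hnhds : {x : ℂ | z.re / 2 < x.re} ∈ 𝓝 z :=
    (isOpen_lt continuous_const continuous_re).mem_nhds (half_lt_self hz')
  have ha' : 0 < (a + 1).re := by simp only [add_re, one_re]; linarith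
  refine (hasDerivAt_integral_of_dominated_loc_of_deriv_le (μ := volume.restrict (Ioi 0))
    (F := fun z (t : ℝ) => (t : ℂ) ^ (a - 1) * exp (-(z * t)))
    (F' := fun z (t : ℝ) => -((t : ℂ) ^ (a + 1 - 1) * exp (-(z * t))))
    (bound := fun t : ℝ => t ^ a.re * Real.exp (-(z.re / 2 * t))) hnhds ?_
    (integrableOn_cpow_mul_exp_neg_mul_Ioi ha hz')
    (integrableOn_cpow_mul_exp_neg_mul_Ioi ha' hz').neg.aestronglyMeasurable ?_
    (integrableOn_rpow_mul_exp_neg_mul_Ioi (by linarith) (half_pos hz')) ?_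
    ).2.differentiableAt.differentiableWithinAt
  · filter_upwards [hnhds] with x hx
    exact (integrableOn_cpow_mul_exp_neg_mul_Ioi ha ((half_pos hz').trans hx)).aestronglyMeasurable
  · filter_upwards [ae_restrict_mem measurableSet_Ioi] with t ht x hx
    rw [norm_neg, norm_cpow_mul_exp_neg_mul ht, add_re, one_re, add_sub_cancel_right]
    have hx' : z.re / 2 < x.re := hx
    have ht' : 0 < t := ht
    gcongr
  · filter_upwards [ae_restrict_mem measurableSet_Ioi] with t ht x _
    exact hasDerivAt_cpow_mul_exp_neg_mul ht a x

theorem integral_cpow_mul_exp_neg_mul_Ioi_complex {a z : ℂ} (ha : 0 < a.re) (hz : 0 < z.re) :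
    ∫ t in Ioi (0 : ℝ), (t : ℂ) ^ (a - 1) * exp (-(z * t)) = (1 / z) ^ a * Gamma a := by
  have hU : IsOpen {z : ℂ | 0 < z.re} := isOpen_lt continuous_const continuous_re
  have hrhs : DifferentiableOn ℂ (fun z : ℂ => (1 / z) ^ a * Gamma a) {z | 0 < z.re} := by
    intro z hz
    have hz0 : z ≠ 0 := fun h => by simp [h] at hz
    have hinv : 1 / z ∈ slitPlane := mem_slitPlane_iff.2 (Or.inl (by
      rw [one_div, inv_re]; exact div_pos hz (normSq_pos.2 hz0)))
    exact (((differentiableAt_const 1).div differentiableAt_id hz0).cpow_const hinv).mul_const _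
      |>.differentiableWithinAt
  have hreal : ∃ᶠ w in 𝓝[≠] (1 : ℂ),
      ∫ t in Ioi (0 : ℝ), (t : ℂ) ^ (a - 1) * exp (-(w * t)) = (1 / w) ^ a * Gamma a := by
    have hofReal : Tendsto ((↑) : ℝ → ℂ) (𝓝[≠] 1) (𝓝[≠] 1) := by
      simpa using (continuous_ofReal.continuousWithinAt (x := 1)).tendsto_nhdsWithin
        (t := {1}ᶜ) (fun _ _ ↦ by simp_all)
    refine hofReal.frequently (Eventually.frequently ?_)
    filter_upwards [eventually_nhdsWithin_of_eventually_nhds (lt_mem_nhds one_pos)] with r hr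
    exact integral_cpow_mul_exp_neg_mul_Ioi ha hr
  have hlhs := differentiableOn_integral_cpow_mul_exp_neg_mul_Ioi ha
  exact (hlhs.analyticOnNhd hU).eqOn_of_preconnected_of_frequently_eq (hrhs.analyticOnNhd hU)
    (convex_halfSpace_re_gt 0).isPreconnected (by simp) hreal hz

theorem integral_cpow_mul_exp_mul_sub_Ioi {a k : ℂ} (ha : 0 < a.re) (hk : 0 < k.re) (t : ℂ) :
    ∫ r in Ioi (0 : ℝ), (r : ℂ) ^ (a - 1) * exp (k * (t - r)) =
      (1 / k) ^ a * Gamma a * exp (k * t) := by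
  have hsplit : ∀ r : ℝ, (r : ℂ) ^ (a - 1) * exp (k * (t - r)) =
      exp (k * t) * ((r : ℂ) ^ (a - 1) * exp (-(k * r))) := fun r => by
    rw [mul_sub, sub_eq_add_neg (k * t), exp_add]
    ring
  simp_rw [hsplit]
  rw [integral_const_mul, integral_cpow_mul_exp_neg_mul_Ioi_complex ha hk]
  ring

lemma one_div_cpow_sub_mul_cpow {k : ℂ} (hk : k ∈ slitPlane) (b α : ℂ) :
    (1 / k) ^ (b - α) * k ^ b = k ^ α := by
  rw [one_div, inv_cpow _ _ (slitPlane_arg_ne_pi hk), ← sub_add_cancel b α,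
    cpow_add _ _ (slitPlane_ne_zero hk), add_sub_cancel_right]
  field_simp [cpow_ne_zero_iff, slitPlane_ne_zero hk]

end Complex

theorem lerch_stmt4_general (α k : ℂ) (hk : 0 < k.re)
    (n : ℕ) (hn : (n : ℤ) = ⌊α.re⌋ + 1) :
    ContDiff ℂ n (fun t : ℂ => (1 / Complex.Gamma ((n : ℂ) - α)) *
        ∫ r in Set.Ioi (0:ℝ), (r : ℂ) ^ ((n : ℂ) - α - 1) * Complex.exp (k * (t - r))) ∧
    ∀ t : ℂ,
      iteratedDeriv n (fun t : ℂ => (1 / Complex.Gamma ((n : ℂ) - α)) *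
          ∫ r in Set.Ioi (0:ℝ), (r : ℂ) ^ ((n : ℂ) - α - 1) * Complex.exp (k * (t - r))) t =
        k ^ α * Complex.exp (k * t) := by
  have ha : 0 < ((n : ℂ) - α).re := by
    have hn' : (n : ℝ) = ⌊α.re⌋ + 1 := by exact_mod_cast hn
    simp [hn', Int.lt_floor_add_one]
  have hg : (fun t : ℂ => (1 / Gamma ((n : ℂ) - α)) *
        ∫ r in Ioi (0:ℝ), (r : ℂ) ^ ((n : ℂ) - α - 1) * exp (k * (t - r))) =
      fun t => (1 / k) ^ ((n : ℂ) - α) * exp (k * t) := by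
    funext t
    rw [integral_cpow_mul_exp_mul_sub_Ioi ha hk]
    field_simp [Gamma_ne_zero_of_re_pos ha]
  rw [hg]
  refine ⟨by fun_prop, fun t => ?_⟩
  rw [iteratedDeriv_const_mul_field, iteratedDeriv_cexp_const_mul, ← mul_assoc, ← cpow_natCast,
    one_div_cpow_sub_mul_cpow (mem_slitPlane_iff.2 (Or.inl hk))]

/-- The Riemann–Liouville fractional derivative (order `α`, `Re α ≥ 0`, constant of
differintegration `−∞`) of the exponential `e^{kt}` (with `Re k > 0`): with
`n = ⌊Re α⌋ + 1`, the fractional integral `g` of order `n − α` is `n` times complex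
differentiable on `ℂ` and its `n`-th derivative is `k^α e^{kt}` (principal branch). -/
theorem lerch_stmt4 (α k : ℂ) (hα : 0 ≤ α.re) (hk : 0 < k.re)
    (n : ℕ) (hn : (n : ℤ) = ⌊α.re⌋ + 1) :
    ContDiff ℂ n (fun t : ℂ => (1 / Complex.Gamma ((n : ℂ) - α)) *
        ∫ r in Set.Ioi (0:ℝ), (r : ℂ) ^ ((n : ℂ) - α - 1) * Complex.exp (k * (t - r))) ∧
    ∀ t : ℂ,
      iteratedDeriv n (fun t : ℂ => (1 / Complex.Gamma ((n : ℂ) - α)) *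
          ∫ r in Set.Ioi (0:ℝ), (r : ℂ) ^ ((n : ℂ) - α - 1) * Complex.exp (k * (t - r))) t =
        k ^ α * Complex.exp (k * t) :=
  lerch_stmt4_general α k hk n hn
end

section
/- Let t, x, s ∈ ℂ with Im(t) > 0, Im(x) < 0, and Re(s) > 0. Then the series ∑_{n=0}^∞ (n+x)^{−s} · e^{2πitn} converges absolutely, the function r ↦ r^{s−1} · e^{2πi(t−r)x} / (1 − e^{2πi(t−r)}) is integrable on (0, ∞), and ∑_{n=0}^∞ (n+x)^{−s} · e^{2πitn} = (2π)^s · exp(iπ(s/2 − 2tx)) · (1/Γ(s)) · ∫_0^∞ r^{s−1} · e^{2πi(t−r)x} / (1 − e^{2πi(t−r)}) dr. -/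
/-!
Since `‖e^{2πi(t-r)}‖ = e^{-2π Im t} < 1`, the denominator expands as a geometric series and
the integral becomes `∑ₙ ∫₀^∞ r^{s-1} e^{2πi(t-r)(n+x)} dr`; sum and integral may be swapped
because in norm the `n`-th integrand is `e^{-2πn Im t}` times a fixed integrable function.
Each term is `e^{2πit(n+x)}` times the Gamma integral `∫₀^∞ r^{s-1} e^{-ar} dr = Γ(s) a^{-s}`
with `a = 2πi(n+x)`, `Re a = -2π Im x > 0`; this Gamma integral is known for real `a > 0` and
extends to `Re a > 0` by the identity theorem. Finally `arg (n+x) ∈ (-π, 0)`, so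
`(2πi(n+x))^{-s} = (2π)^{-s} e^{-iπs/2} (n+x)^{-s}`.
-/

open Complex Real MeasureTheory Set Filter Topology

section GeometricSeries

variable {α : Type*} {f g : α → ℂ} {q : ℝ}

lemma norm_mul_pow_le_of_norm_le (hgq : ∀ a, ‖g a‖ ≤ q) (n : ℕ) (a : α) :
    ‖f a * g a ^ n‖ ≤ q ^ n * ‖f a‖ := by
  rw [norm_mul, norm_pow, mul_comm]
  gcongr
  exact hgq a

variable [MeasurableSpace α] {μ : Measure α}

lemma integrable_mul_pow_of_norm_le (hf : Integrable f μ) (hg : AEStronglyMeasurable g μ)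
    (hgq : ∀ a, ‖g a‖ ≤ q) (n : ℕ) : Integrable (fun a => f a * g a ^ n) μ :=
  (hf.norm.const_mul (q ^ n)).mono' (hf.1.mul (hg.pow n))
    (Eventually.of_forall (norm_mul_pow_le_of_norm_le hgq n))

lemma summable_integral_norm_mul_pow (hf : Integrable f μ) (hg : AEStronglyMeasurable g μ)
    (hq₀ : 0 ≤ q) (hq : q < 1) (hgq : ∀ a, ‖g a‖ ≤ q) :
    Summable fun n : ℕ => ∫ a, ‖f a * g a ^ n‖ ∂μ := by
  refine ((summable_geometric_of_lt_one hq₀ hq).mul_right (∫ a, ‖f a‖ ∂μ)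
    ).of_nonneg_of_le (fun _ => integral_nonneg fun _ => norm_nonneg _) fun n => ?_
  rw [← integral_const_mul]
  exact integral_mono (integrable_mul_pow_of_norm_le hf hg hgq n).norm
    (hf.norm.const_mul _) (norm_mul_pow_le_of_norm_le hgq n)

lemma integrable_div_one_sub (hf : Integrable f μ) (hg : AEStronglyMeasurable g μ)
    (hq : q < 1) (hgq : ∀ a, ‖g a‖ ≤ q) : Integrable (fun a => f a / (1 - g a)) μ := by
  refine (hf.norm.div_const (1 - q)).mono' (hf.1.div₀ (aestronglyMeasurable_const.sub hg))
    (Eventually.of_forall fun a => ?_)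
  have hden : 1 - q ≤ ‖1 - g a‖ := by
    have := norm_sub_norm_le (1 : ℂ) (g a)
    rw [norm_one] at this
    linarith [hgq a]
  rw [norm_div]
  exact div_le_div_of_nonneg_left (norm_nonneg _) (sub_pos.2 hq) hden

lemma integral_div_one_sub_eq_tsum (hf : Integrable f μ) (hg : AEStronglyMeasurable g μ)
    (hq₀ : 0 ≤ q) (hq : q < 1) (hgq : ∀ a, ‖g a‖ ≤ q) :
    ∫ a, f a / (1 - g a) ∂μ = ∑' n : ℕ, ∫ a, f a * g a ^ n ∂μ := by
  rw [integral_tsum_of_summable_integral_norm (integrable_mul_pow_of_norm_le hf hg hgq)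
    (summable_integral_norm_mul_pow hf hg hq₀ hq hgq)]
  congr 1 with a
  rw [tsum_mul_left, tsum_geometric_of_norm_lt_one ((hgq a).trans_lt hq), div_eq_mul_inv]

end GeometricSeries

section GammaIntegral

lemma integrableOn_rpow_mul_exp_neg_mul {σ b : ℝ} (hσ : -1 < σ) (hb : 0 < b) :
    IntegrableOn (fun r : ℝ => r ^ σ * rexp (-(b * r))) (Ioi 0) := by
  simpa using integrableOn_rpow_mul_exp_neg_mul_rpow hσ one_pos hb

lemma norm_cpow_mul_cexp_neg_mul {r : ℝ} (hr : 0 < r) (a s : ℂ) :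
    ‖(r : ℂ) ^ (s - 1) * cexp (-(a * r))‖ = r ^ (s.re - 1) * rexp (-(a.re * r)) := by
  simp [norm_cpow_eq_rpow_re_of_pos hr, norm_exp]

lemma continuousOn_cpow_mul_cexp_neg_mul (a s : ℂ) :
    ContinuousOn (fun r : ℝ => (r : ℂ) ^ (s - 1) * cexp (-(a * r))) (Ioi 0) := by
  refine ContinuousOn.mul (fun r hr => ?_) (by fun_prop)
  exact ((continuousAt_cpow_const (ofReal_mem_slitPlane.2 hr)).comp
    continuous_ofReal.continuousAt).continuousWithinAt

lemma integrableOn_cpow_mul_cexp_neg_mul {a s : ℂ} (ha : 0 < a.re) (hs : 0 < s.re) :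
    IntegrableOn (fun r : ℝ => (r : ℂ) ^ (s - 1) * cexp (-(a * r))) (Ioi 0) := by
  refine (integrableOn_rpow_mul_exp_neg_mul (by linarith : -1 < s.re - 1) ha).mono'
    ((continuousOn_cpow_mul_cexp_neg_mul a s).aestronglyMeasurable measurableSet_Ioi) ?_
  filter_upwards [ae_restrict_mem measurableSet_Ioi] with r hr
  exact (norm_cpow_mul_cexp_neg_mul hr a s).le

lemma hasDerivAt_cpow_mul_cexp_neg_mul (s w : ℂ) (r : ℝ) :
    HasDerivAt (fun a : ℂ => (r : ℂ) ^ (s - 1) * cexp (-(a * r)))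
      (-(r : ℂ) * ((r : ℂ) ^ (s - 1) * cexp (-(w * r)))) w :=
  (((hasDerivAt_mul_const (x := w) (r : ℂ)).fun_neg.cexp).const_mul _).congr_deriv (by ring)

lemma differentiableOn_integral_cpow_mul_cexp_neg_mul {s : ℂ} (hs : 0 < s.re) :
    DifferentiableOn ℂ
      (fun a : ℂ => ∫ r in Ioi (0 : ℝ), (r : ℂ) ^ (s - 1) * cexp (-(a * r)))
      {a | 0 < a.re} := by
  intro a₀ (ha₀ : 0 < a₀.re)
  have hε : 0 < a₀.re / 2 := by positivity
  have hbound : ∀ r ∈ Ioi (0 : ℝ), ∀ a ∈ Metric.ball a₀ (a₀.re / 2),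
      ‖-(r : ℂ) * ((r : ℂ) ^ (s - 1) * cexp (-(a * r)))‖ ≤
        r ^ s.re * rexp (-(a₀.re / 2 * r)) := by
    intro r (hr : 0 < r) a ha
    have hre : a₀.re / 2 ≤ a.re := by
      have := (abs_re_le_norm (a - a₀)).trans_lt (mem_ball_iff_norm.1 ha)
      rw [sub_re, abs_lt] at this
      linarith
    rw [norm_mul, norm_neg, norm_real, Real.norm_of_nonneg hr.le,
      norm_cpow_mul_cexp_neg_mul hr, ← mul_assoc, ← Real.rpow_one_add' hr.le (by linarith),
      add_sub_cancel]
    gcongr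
  have key := hasDerivAt_integral_of_dominated_loc_of_deriv_le (μ := volume.restrict (Ioi 0))
    (Metric.ball_mem_nhds a₀ hε)
    (Eventually.of_forall fun a =>
      (continuousOn_cpow_mul_cexp_neg_mul a s).aestronglyMeasurable measurableSet_Ioi)
    (integrableOn_cpow_mul_cexp_neg_mul ha₀ hs)
    ((continuous_ofReal.neg.continuousOn.mul (continuousOn_cpow_mul_cexp_neg_mul a₀ s)
      ).aestronglyMeasurable measurableSet_Ioi)
    ((ae_restrict_iff' measurableSet_Ioi).2 (Eventually.of_forall hbound))
    (integrableOn_rpow_mul_exp_neg_mul (by linarith) hε)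
    (Eventually.of_forall fun r a _ => hasDerivAt_cpow_mul_cexp_neg_mul s a r)
  exact key.2.differentiableAt.differentiableWithinAt

lemma integral_cpow_mul_cexp_neg_mul {a s : ℂ} (ha : 0 < a.re) (hs : 0 < s.re) :
    ∫ r in Ioi (0 : ℝ), (r : ℂ) ^ (s - 1) * cexp (-(a * r)) = Gamma s * a ^ (-s) := by
  have hU : IsOpen {z : ℂ | 0 < z.re} := isOpen_lt continuous_const continuous_re
  have hrhs : DifferentiableOn ℂ (fun z : ℂ => Gamma s * z ^ (-s)) {z | 0 < z.re} :=
    fun z hz => ((differentiableAt_id.cpow_const (Or.inl hz)).const_mul _).differentiableWithinAt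
  have hreal : ∀ b : ℝ, 0 < b →
      ∫ r in Ioi (0 : ℝ), (r : ℂ) ^ (s - 1) * cexp (-(b * r)) =
        Gamma s * (b : ℂ) ^ (-s) := by
    intro b hb
    rw [integral_cpow_mul_exp_neg_mul_Ioi hs hb, one_div,
      inv_cpow _ _ (by simpa [arg_ofReal_of_nonneg hb.le] using pi_ne_zero.symm), ← cpow_neg,
      mul_comm]
  -- The two sides agree at the real points `b > 1`, which accumulate at `1`.
  have hfreq : ∃ᶠ z in 𝓝[≠] (1 : ℂ),
      ∫ r in Ioi (0 : ℝ), (r : ℂ) ^ (s - 1) * cexp (-(z * r)) = Gamma s * z ^ (-s) := by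
    have htends : Tendsto ((↑) : ℝ → ℂ) (𝓝[>] 1) (𝓝[≠] 1) :=
      tendsto_nhdsWithin_of_tendsto_nhds_of_eventually_within _
        (by simpa using continuous_ofReal.continuousWithinAt.tendsto (s := Ioi (1 : ℝ)) (x := 1))
        (eventually_nhdsWithin_of_forall fun b hb => by
          simpa using (ne_of_gt (mem_Ioi.1 hb)))
    exact htends.frequently (Eventually.frequently
      (eventually_nhdsWithin_of_forall fun b hb => hreal b (one_pos.trans hb)))
  exact ((differentiableOn_integral_cpow_mul_cexp_neg_mul hs).analyticOnNhd hU
    ).eqOn_of_preconnected_of_frequently_eq (hrhs.analyticOnNhd hU)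
      (convex_halfSpace_re_gt 0).isPreconnected (by simp) hfreq ha

end GammaIntegral

namespace Complex

lemma ofReal_mul_cpow {r : ℝ} (hr : 0 < r) {w : ℂ} (hw : w ≠ 0) (s : ℂ) :
    ((r : ℂ) * w) ^ s = (r : ℂ) ^ s * w ^ s := by
  rw [cpow_def_of_ne_zero (mul_ne_zero (ofReal_ne_zero.2 hr.ne') hw), log_ofReal_mul hr hw,
    cpow_def_of_ne_zero hw, cpow_def_of_ne_zero (ofReal_ne_zero.2 hr.ne'), ofReal_log hr.le,
    add_mul, exp_add]

lemma I_mul_cpow {w : ℂ} (hw₀ : w ≠ 0) (hw : w.arg ≤ π / 2) (s : ℂ) :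
    (I * w) ^ s = cexp (π / 2 * I * s) * w ^ s := by
  have harg : arg I + arg w ∈ Ioc (-π) π := by
    rw [arg_I]
    constructor <;> linarith [neg_pi_lt_arg w]
  rw [cpow_def_of_ne_zero (mul_ne_zero I_ne_zero hw₀), log_mul I_ne_zero hw₀ harg, log_I,
    add_mul, exp_add, cpow_def_of_ne_zero hw₀]

end Complex

section LerchKernel

noncomputable def lerchKernel (t w s : ℂ) (r : ℝ) : ℂ :=
  (r : ℂ) ^ (s - 1) * cexp (2 * π * I * (t - r) * w)

variable {w s : ℂ}

lemma lerchKernel_eq (t : ℂ) (r : ℝ) :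
    lerchKernel t w s r =
      cexp (2 * π * I * t * w) * ((r : ℂ) ^ (s - 1) * cexp (-(2 * π * I * w * r))) := by
  rw [lerchKernel, mul_left_comm, ← Complex.exp_add]
  congr 2
  ring

lemma re_two_pi_I_mul_pos (hw : w.im < 0) : 0 < (2 * π * I * w).re := by
  have hre : (2 * π * I * w).re = -(2 * π * w.im) := by simp
  rw [hre]
  nlinarith [pi_pos]

lemma integrableOn_lerchKernel (t : ℂ) (hw : w.im < 0) (hs : 0 < s.re) :
    IntegrableOn (lerchKernel t w s) (Ioi 0) := by
  refine IntegrableOn.congr_fun ?_ (fun r _ => (lerchKernel_eq t r).symm) measurableSet_Ioi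
  exact (integrableOn_cpow_mul_cexp_neg_mul (re_two_pi_I_mul_pos hw) hs).const_mul _

lemma two_pi_I_mul_cpow (hw : w.im < 0) (s : ℂ) :
    (2 * π * I * w) ^ s = ((2 * π : ℝ) : ℂ) ^ s * cexp (π / 2 * I * s) * w ^ s := by
  have hw₀ : w ≠ 0 := fun h => by simp [h] at hw
  rw [show 2 * π * I * w = ((2 * π : ℝ) : ℂ) * (I * w) by push_cast; ring,
    ofReal_mul_cpow (by positivity) (mul_ne_zero I_ne_zero hw₀), I_mul_cpow hw₀
      ((arg_neg_iff.2 hw).le.trans (by positivity))]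
  ring

lemma integral_lerchKernel (t : ℂ) (hw : w.im < 0) (hs : 0 < s.re) :
    ∫ r in Ioi (0 : ℝ), lerchKernel t w s r =
      Gamma s * ((2 * π : ℝ) : ℂ) ^ (-s) * cexp (π * I * (2 * t * w - s / 2)) * w ^ (-s) := by
  simp_rw [lerchKernel_eq, integral_const_mul]
  rw [integral_cpow_mul_cexp_neg_mul (re_two_pi_I_mul_pos hw) hs, two_pi_I_mul_cpow hw]
  have hexp : cexp (π * I * (2 * t * w - s / 2)) =
      cexp (2 * π * I * t * w) * cexp (π / 2 * I * -s) := by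
    rw [← Complex.exp_add]
    ring_nf
  rw [hexp]
  ring

lemma lerchKernel_mul_pow (t : ℂ) (r : ℝ) (n : ℕ) :
    lerchKernel t w s r * cexp (2 * π * I * (t - r)) ^ n = lerchKernel t (n + w) s r := by
  rw [lerchKernel, lerchKernel, mul_assoc, ← Complex.exp_nat_mul, ← Complex.exp_add]
  congr 2
  ring

end LerchKernel

lemma lerch_term_eq_integral (t : ℂ) {x s : ℂ} (hx : x.im < 0) (hs : 0 < s.re) (n : ℕ) :
    ((n : ℂ) + x) ^ (-s) * cexp (2 * π * I * t * n) =
      ((2 * π : ℝ) : ℂ) ^ s * cexp (π * I * (s / 2 - 2 * t * x)) *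
        ((1 / Gamma s) *
          ∫ r in Ioi (0 : ℝ), lerchKernel t x s r * cexp (2 * π * I * (t - r)) ^ n) := by
  simp_rw [lerchKernel_mul_pow]
  rw [integral_lerchKernel t (by simpa using hx) hs]
  have hΓ : Gamma s ≠ 0 := Gamma_ne_zero_of_re_pos hs
  have h2π : ((2 * π : ℝ) : ℂ) ^ s * ((2 * π : ℝ) : ℂ) ^ (-s) = 1 := by
    rw [← cpow_add _ _ (ofReal_ne_zero.2 two_pi_pos.ne'), add_neg_cancel, cpow_zero]
  have hexp : cexp (π * I * (s / 2 - 2 * t * x)) * cexp (π * I * (2 * t * (n + x) - s / 2)) =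
      cexp (2 * π * I * t * n) := by
    rw [← Complex.exp_add]
    ring_nf
  set E₁ := cexp (π * I * (s / 2 - 2 * t * x))
  set E₂ := cexp (π * I * (2 * t * (n + x) - s / 2))
  set W := ((n : ℂ) + x) ^ (-s)
  set P := ((2 * π : ℝ) : ℂ) ^ s
  set Q := ((2 * π : ℝ) : ℂ) ^ (-s)
  rw [← hexp, one_div]
  linear_combination (-(E₁ * E₂ * W)) * h2π - E₁ * E₂ * W * P * Q * inv_mul_cancel₀ hΓ

/-- Main theorem (interior case): for `Im t > 0`, `Im x < 0`, `Re s > 0`, the Lerch zeta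
series converges absolutely and equals
`(2π)^s e^{iπ(s/2 − 2tx)}` times the Riemann–Liouville fractional integral of order `−s`
(constant of differintegration `−∞`) of `u ↦ e^{2πiux}/(1 − e^{2πiu})` at `u = t`. -/
theorem lerch_stmt7 (t x s : ℂ) (ht : 0 < t.im) (hx : x.im < 0) (hs : 0 < s.re) :
    Summable (fun n : ℕ =>
      ‖((n : ℂ) + x) ^ (-s) * Complex.exp (2 * (π : ℂ) * I * t * n)‖) ∧
    IntegrableOn (fun r : ℝ =>
      (r : ℂ) ^ (s - 1) * Complex.exp (2 * (π : ℂ) * I * (t - r) * x) /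
        (1 - Complex.exp (2 * (π : ℂ) * I * (t - r)))) (Set.Ioi 0) ∧
    ∑' n : ℕ, ((n : ℂ) + x) ^ (-s) * Complex.exp (2 * (π : ℂ) * I * t * n) =
      ((2 * π : ℝ) : ℂ) ^ s * Complex.exp ((π : ℂ) * I * (s / 2 - 2 * t * x)) *
        ((1 / Complex.Gamma s) *
          ∫ r in Set.Ioi (0:ℝ),
            (r : ℂ) ^ (s - 1) * Complex.exp (2 * (π : ℂ) * I * (t - r) * x) /
              (1 - Complex.exp (2 * (π : ℂ) * I * (t - r)))) := by
  set q := rexp (-(2 * π * t.im))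
  have hq₀ : 0 ≤ q := (Real.exp_pos _).le
  have hq : q < 1 := Real.exp_lt_one_iff.2 (by nlinarith [pi_pos])
  have hf := integrableOn_lerchKernel t hx hs
  have hg : AEStronglyMeasurable (fun r : ℝ => cexp (2 * π * I * (t - r)))
      (volume.restrict (Ioi 0)) := (by fun_prop : Continuous _).aestronglyMeasurable
  have hgq : ∀ r : ℝ, ‖cexp (2 * π * I * (t - r))‖ ≤ q := fun r => by simp [norm_exp, q]
  refine ⟨?_, integrable_div_one_sub hf hg hq hgq, ?_⟩
  · refine ((summable_integral_norm_mul_pow hf hg hq₀ hq hgq).mul_left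
      ‖((2 * π : ℝ) : ℂ) ^ s * cexp (π * I * (s / 2 - 2 * t * x)) * (1 / Gamma s)‖
      ).of_nonneg_of_le (fun _ => norm_nonneg _) fun n => ?_
    rw [lerch_term_eq_integral t hx hs n, ← mul_assoc, norm_mul]
    gcongr
    exact norm_integral_le_integral_norm _
  · simp_rw [lerch_term_eq_integral t hx hs]
    rw [tsum_mul_left, tsum_mul_left, ← integral_div_one_sub_eq_tsum hf hg hq₀ hq hgq]
    rfl
end
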